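/- arXiv:2012.08648 — 6 statements merged into one kernel-verified Lean document; each statement's English description precedes it below -/
import Mathlib

section
/- In the max-min fairness allocation, if agent i reports a demand d_i strictly less than her entitlement e_i, then her allocation equals her reported demand d_i. -/
/-!
Let `λ` be the water level. If `λ ≥ 1`, agent `i`'s cap `λ e_i ≥ e_i > d_i` does not bind. If
`λ < 1`, the total allocation is at most `λ ∑ e = λ < 1`, so supply is left over, and since no
agent gets more than her demand, every agent gets exactly her demand.
-/

open Finset

/-- Max-min fairness allocation, characterized as weighted water-filling:
there is a water level `lam` such that every agent receives
`min (d i) (lam * e i)`, and the total allocation equals `min 1 (∑ d)`. -/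
def IsMMF {n : ℕ} (e d a : Fin n → ℝ) : Prop :=
  ∃ lam : ℝ, 0 ≤ lam ∧ (∀ i, a i = min (d i) (lam * e i)) ∧
    (∑ i, a i = min 1 (∑ i, d i))

section WaterFilling

variable {ι : Type*} [Fintype ι]

theorem sum_min_mul_le (d e : ι → ℝ) (lam : ℝ) :
    ∑ i, min (d i) (lam * e i) ≤ lam * ∑ i, e i := by
  rw [mul_sum]
  exact sum_le_sum fun i _ => min_le_right _ _

theorem eq_of_le_of_sum_eq_min_of_sum_lt_one {d a : ι → ℝ} (hle : ∀ i, a i ≤ d i)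
    (hsum : ∑ i, a i = min 1 (∑ i, d i)) (hlt : ∑ i, a i < 1) : a = d := by
  have hsum_eq : ∑ i, a i = ∑ i, d i := by
    rcases min_choice 1 (∑ i, d i) with h | h
    · rw [hsum, h] at hlt
      exact (lt_irrefl 1 hlt).elim
    · rw [hsum, h]
  funext i
  exact (sum_eq_sum_iff_of_le fun j _ => hle j).mp hsum_eq i (mem_univ i)

end WaterFilling

theorem mmf_demand_below_entitlement_general {n : ℕ} (e d a : Fin n → ℝ)
    (he : ∀ i, 0 < e i) (hesum : ∑ i, e i = 1)
    (hmmf : IsMMF e d a) (i : Fin n) (hlt : d i < e i) :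
    a i = d i := by
  obtain ⟨lam, -, ha, hsum⟩ := hmmf
  rcases le_or_gt 1 lam with hlam | hlam
  · rw [ha i, min_eq_left]
    exact hlt.le.trans (le_mul_of_one_le_left (he i).le hlam)
  · have hle : ∀ j, a j ≤ d j := fun j => (ha j).symm ▸ min_le_left _ _
    have hsum_lt : ∑ j, a j < 1 := by
      calc ∑ j, a j = ∑ j, min (d j) (lam * e j) := sum_congr rfl fun j _ => ha j
        _ ≤ lam * ∑ j, e j := sum_min_mul_le d e lam
        _ = lam := by rw [hesum, mul_one]
        _ < 1 := hlam
    exact congrFun (eq_of_le_of_sum_eq_min_of_sum_lt_one hle hsum hsum_lt) i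

/-- If agent `i` reports a demand strictly less than her entitlement,
her max-min fair allocation equals her reported demand. -/
theorem mmf_demand_below_entitlement {n : ℕ} (e d a : Fin n → ℝ)
    (he : ∀ i, 0 < e i) (hesum : ∑ i, e i = 1) (hd : ∀ i, 0 ≤ d i)
    (hmmf : IsMMF e d a) (i : Fin n) (hlt : d i < e i) :
    a i = d i :=
  mmf_demand_below_entitlement_general e d a he hesum hmmf i hlt
end

section
/- In the max-min fairness allocation, if agent i reports a demand d_i >= e_i (her entitlement), then her allocation is at least e_i. -/
/-!
An MMF allocation is `a i = min (d i) (lam * e i)` for a water level `lam`. If `lam ≥ 1`, an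
agent with `d i ≥ e i` receives at least `lam * e i ≥ e i`. If `lam < 1`, the allocation totals
at most `lam * ∑ e = lam < 1`, so the supply is not exhausted and every demand is met in full.
-/

open Finset

section WaterFilling

variable {ι : Type*} {e d a : ι → ℝ} {lam : ℝ}

theorem alloc_le_demand (ha : ∀ i, a i = min (d i) (lam * e i)) (i : ι) : a i ≤ d i :=
  (ha i).trans_le (min_le_left _ _)

theorem sum_alloc_le_level_mul_sum [Fintype ι] (ha : ∀ i, a i = min (d i) (lam * e i)) :
    ∑ i, a i ≤ lam * ∑ i, e i := by
  rw [mul_sum]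
  exact sum_le_sum fun i _ => (ha i).trans_le (min_le_right _ _)

theorem alloc_eq_demand_of_level_lt_one [Fintype ι] (ha : ∀ i, a i = min (d i) (lam * e i))
    (hesum : ∑ i, e i = 1) (hsum : ∑ i, a i = min 1 (∑ i, d i)) (hlam : lam < 1) : a = d := by
  have hsum_lt : ∑ i, a i < 1 :=
    calc ∑ i, a i ≤ lam * ∑ i, e i := sum_alloc_le_level_mul_sum ha
      _ = lam := by rw [hesum, mul_one]
      _ < 1 := hlam
  have hsum_eq : ∑ i, a i = ∑ i, d i := by
    rcases min_choice 1 (∑ i, d i) with h | h <;> rw [h] at hsum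
    · exact absurd hsum hsum_lt.ne
    · exact hsum
  funext i
  exact (sum_eq_sum_iff_of_le fun j _ => alloc_le_demand ha j).1 hsum_eq i (mem_univ i)

end WaterFilling

theorem mmf_demand_above_entitlement_general {n : ℕ} (e d a : Fin n → ℝ)
    (he : ∀ i, 0 < e i) (hesum : ∑ i, e i = 1)
    (hmmf : IsMMF e d a) (i : Fin n) (hge : e i ≤ d i) :
    e i ≤ a i := by
  obtain ⟨lam, -, ha, hsum⟩ := hmmf
  rcases le_or_gt 1 lam with hlam | hlam
  · rw [ha i]
    exact le_min hge (le_mul_of_one_le_left (he i).le hlam)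
  · rwa [alloc_eq_demand_of_level_lt_one ha hesum hsum hlam]

/-- If agent `i` reports a demand at least her entitlement,
her max-min fair allocation is at least her entitlement. -/
theorem mmf_demand_above_entitlement {n : ℕ} (e d a : Fin n → ℝ)
    (he : ∀ i, 0 < e i) (hesum : ∑ i, e i = 1) (hd : ∀ i, 0 ≤ d i)
    (hmmf : IsMMF e d a) (i : Fin n) (hge : e i ≤ d i) :
    e i ≤ a i :=
  mmf_demand_above_entitlement_general e d a he hesum hmmf i hge
end

section
/- Max-min fairness is strategy-proof: for any agent i with a utility function u_i that is strictly increasing up to her true demand D_i and constant thereafter, and for any fixed reported demands of all other agents, agent i's utility under truthful reporting d_i = D_i is at least her utility under any other report. -/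
/-!
If the truthful report leaves agent `i` capped by her demand `D`, she already gets her best
possible utility. Otherwise she is cut off by the water level, so the truthful allocation
exhausts the resource. A misreport that gave her strictly more would need a strictly higher
water level, which gives every other agent at least as much as before, and the total would
exceed the unit resource. Hence any misreport gives her at most her truthful share, which is
below `D`, where `u` is monotone.
-/

open Finset

theorem MonotoneOn.apply_le_of_eq_on_Ioi {u : ℝ → ℝ} {D x : ℝ}
    (hmono : MonotoneOn u (Set.Icc 0 D)) (hflat : ∀ y, D < y → u y = u D) (hx : 0 ≤ x) :
    u x ≤ u D := by
  rcases le_or_gt x D with hxD | hDx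
  · exact hmono ⟨hx, hxD⟩ ⟨hx.trans hxD, le_rfl⟩ hxD
  · exact (hflat x hDx).le

namespace IsMMF

variable {n : ℕ} {e d a : Fin n → ℝ}

theorem apply_nonneg (h : IsMMF e d a) (i : Fin n) (hei : 0 ≤ e i) (hdi : 0 ≤ d i) :
    0 ≤ a i := by
  obtain ⟨lam, hlam, ha, -⟩ := h
  rw [ha]
  exact le_min hdi (mul_nonneg hlam hei)

theorem apply_le_demand (h : IsMMF e d a) (i : Fin n) : a i ≤ d i := by
  obtain ⟨lam, -, ha, -⟩ := h
  rw [ha]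
  exact min_le_left _ _

theorem sum_le_one (h : IsMMF e d a) : ∑ j, a j ≤ 1 := by
  obtain ⟨-, -, -, hsum⟩ := h
  rw [hsum]
  exact min_le_left _ _

theorem sum_eq_one_of_lt_demand (h : IsMMF e d a) {i : Fin n} (hi : a i < d i) :
    ∑ j, a j = 1 := by
  have hle : ∀ j ∈ univ, a j ≤ d j := fun j _ => h.apply_le_demand j
  obtain ⟨-, -, -, hsum⟩ := h
  rcases le_or_gt (∑ j, d j) 1 with hd | hd
  · rw [min_eq_right hd] at hsum
    exact absurd ((sum_eq_sum_iff_of_le hle).mp hsum i (mem_univ i)) hi.ne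
  · rw [hsum, min_eq_left hd.le]

theorem apply_le_of_lt_demand {d' a' : Fin n → ℝ} (he : ∀ j, 0 ≤ e j) (h : IsMMF e d a)
    (h' : IsMMF e d' a') {i : Fin n} (hdd' : ∀ j, j ≠ i → d j = d' j) (hi : a' i < d' i) :
    a i ≤ a' i := by
  have hsum' : ∑ j, a' j = 1 := h'.sum_eq_one_of_lt_demand hi
  have hsum : ∑ j, a j ≤ 1 := h.sum_le_one
  obtain ⟨lam, -, ha, -⟩ := h
  obtain ⟨mu, -, ha', -⟩ := h'
  have ha'i : a' i = mu * e i := by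
    rw [ha'] at hi ⊢
    exact min_eq_right (not_lt.mp fun hd'i => hi.ne (min_eq_left hd'i.le))
  by_contra! hlt
  have hmu : mu ≤ lam := by
    refine (lt_of_mul_lt_mul_right ?_ (he i)).le
    calc mu * e i = a' i := ha'i.symm
      _ < a i := hlt
      _ ≤ lam * e i := by rw [ha]; exact min_le_right _ _
  have hle : ∀ j ∈ univ, a' j ≤ a j := by
    intro j _
    rcases eq_or_ne j i with rfl | hj
    · exact hlt.le
    · rw [ha, ha', ← hdd' j hj]
      exact min_le_min le_rfl (mul_le_mul_of_nonneg_right hmu (he j))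
  have : ∑ j, a' j < ∑ j, a j := sum_lt_sum hle ⟨i, mem_univ i, hlt⟩
  linarith

end IsMMF

theorem mmf_strategy_proof_general {n : ℕ} (e d : Fin n → ℝ) (i : Fin n) (D : ℝ)
    (he : ∀ j, 0 < e j)
    (hd : ∀ j, 0 ≤ d j)
    (u : ℝ → ℝ)
    (hstrict : StrictMonoOn u (Set.Icc 0 D))
    (hflat : ∀ x, D < x → u x = u D)
    (a astar : Fin n → ℝ)
    (ha : IsMMF e d a)
    (hastar : IsMMF e (Function.update d i D) astar) :
    u (a i) ≤ u (astar i) := by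
  have ha0 : 0 ≤ a i := ha.apply_nonneg i (he i).le (hd i)
  have hastarD : astar i ≤ D := by simpa using hastar.apply_le_demand i
  rcases hastarD.lt_or_eq with hlt | rfl
  · have hle : a i ≤ astar i :=
      ha.apply_le_of_lt_demand (fun j => (he j).le) hastar
        (fun j hj => (Function.update_of_ne hj D d).symm) (by simpa using hlt)
    exact hstrict.monotoneOn ⟨ha0, hle.trans hastarD⟩ ⟨ha0.trans hle, hastarD⟩ hle
  · exact hstrict.monotoneOn.apply_le_of_eq_on_Ioi hflat ha0

/-- Max-min fairness is strategy-proof: for an agent `i` whose utility is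
strictly increasing up to her true demand `D` and constant thereafter,
and for any fixed reports of the other agents, the utility of her allocation
under truthful reporting is at least that under any other report `d i`. -/
theorem mmf_strategy_proof {n : ℕ} (e d : Fin n → ℝ) (i : Fin n) (D : ℝ)
    (he : ∀ j, 0 < e j) (hesum : ∑ j, e j = 1)
    (hd : ∀ j, 0 ≤ d j) (hD : 0 ≤ D)
    (u : ℝ → ℝ)
    (hstrict : StrictMonoOn u (Set.Icc 0 D))
    (hflat : ∀ x, D < x → u x = u D)
    (a astar : Fin n → ℝ)
    (ha : IsMMF e d a)
    (hastar : IsMMF e (Function.update d i D) astar) :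
    u (a i) ≤ u (astar i) :=
  mmf_strategy_proof_general e d i D he hd u hstrict hflat a astar ha hastar
end

section
/- For the bracketed schedule with 2n exploration rounds per bracket followed by floor(e^q) rounds in bracket q, the number of completed brackets q_T after T >= 2n+3 rounds satisfies log(T/(2n+e)) <= q_T <= 1 + log(T). -/
/-! The sum `∑_{t ≤ q} e^t` is geometric with ratio `e ≥ 2`, hence at most `e^(q+1)`, so
`T ≤ T_q ≤ 2nq + e^(q+1) ≤ (2n + e) e^q`. Conversely the last summand of `T_{q-1}` alone gives
`e^(q-1) < ⌊e^(q-1)⌋ + 1 ≤ T_{q-1} + 1 ≤ T`. -/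

open Finset

/-- Total number of rounds completed after `m` brackets when each bracket has
`2n` exploration rounds followed by `⌊e^q⌋` rounds in bracket `q`. -/
noncomputable def bracketRoundsExp (n m : ℕ) : ℕ :=
  2 * n * m + ∑ t ∈ Finset.Icc 1 m, ⌊Real.exp t⌋₊

theorem sum_Icc_pow_le_pow_succ {x : ℝ} (hx : 2 ≤ x) (q : ℕ) :
    ∑ t ∈ Icc 1 q, x ^ t ≤ x ^ (q + 1) := by
  induction q with
  | zero => simpa using zero_le_two.trans hx
  | succ q ih =>
    rw [sum_Icc_succ_top (by omega)]
    have hpow : 0 ≤ x ^ (q + 1) := by positivity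
    calc ∑ t ∈ Icc 1 q, x ^ t + x ^ (q + 1) ≤ 2 * x ^ (q + 1) := by linarith
      _ ≤ x * x ^ (q + 1) := by gcongr
      _ = x ^ (q + 1 + 1) := by ring

theorem sum_Icc_exp_le (q : ℕ) : ∑ t ∈ Icc 1 q, Real.exp t ≤ Real.exp 1 * Real.exp q := by
  simp only [← Real.exp_one_pow]
  simpa [pow_succ'] using sum_Icc_pow_le_pow_succ Real.exp_one_gt_two.le q

theorem bracketRoundsExp_le (n q : ℕ) :
    (bracketRoundsExp n q : ℝ) ≤ (2 * n + Real.exp 1) * Real.exp q := by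
  have hfloor : ∑ t ∈ Icc 1 q, (⌊Real.exp t⌋₊ : ℝ) ≤ ∑ t ∈ Icc 1 q, Real.exp t :=
    sum_le_sum fun t _ => Nat.floor_le (Real.exp_pos _).le
  have hq : (q : ℝ) ≤ Real.exp q := by linarith [Real.add_one_le_exp (q : ℝ)]
  have hnq : 2 * n * (q : ℝ) ≤ 2 * n * Real.exp q := by gcongr
  unfold bracketRoundsExp
  push_cast
  linarith [sum_Icc_exp_le q]

theorem exp_lt_bracketRoundsExp_add_one (n : ℕ) {m : ℕ} (hm : 1 ≤ m) :
    Real.exp m < bracketRoundsExp n m + 1 := by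
  have hfloor : ⌊Real.exp m⌋₊ ≤ bracketRoundsExp n m := by
    unfold bracketRoundsExp
    have hlast := single_le_sum (f := fun t : ℕ => ⌊Real.exp t⌋₊) (fun _ _ => Nat.zero_le _)
      (mem_Icc.mpr ⟨hm, le_rfl⟩)
    omega
  calc Real.exp m < ⌊Real.exp m⌋₊ + 1 := Nat.lt_floor_add_one _
    _ ≤ bracketRoundsExp n m + 1 := by gcongr

theorem exp_sub_one_le_of_bracketRoundsExp_lt {n q T : ℕ} (h : bracketRoundsExp n (q - 1) < T) :
    Real.exp ((q : ℝ) - 1) ≤ T := by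
  rcases le_or_gt q 1 with hq | hq
  · have hT : (1 : ℝ) ≤ T := by exact_mod_cast (Nat.zero_lt_of_lt h)
    calc Real.exp ((q : ℝ) - 1) ≤ Real.exp 0 := by
          gcongr
          linarith [show (q : ℝ) ≤ 1 by exact_mod_cast hq]
      _ ≤ T := by simpa using hT
  · have hT : (bracketRoundsExp n (q - 1) : ℝ) + 1 ≤ T := by exact_mod_cast h
    have hexp := exp_lt_bracketRoundsExp_add_one n (m := q - 1) (by omega)
    rw [Nat.cast_sub hq.le, Nat.cast_one] at hexp
    linarith

theorem bracket_count_log_general (n T q : ℕ)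
    (hlow : bracketRoundsExp n (q - 1) < T) (hhigh : T ≤ bracketRoundsExp n q) :
    Real.log ((T : ℝ) / (2 * n + Real.exp 1)) ≤ (q : ℝ) ∧
      (q : ℝ) ≤ 1 + Real.log T := by
  have hT : (0 : ℝ) < T := by exact_mod_cast Nat.zero_lt_of_lt hlow
  have hc : (0 : ℝ) < 2 * n + Real.exp 1 := by positivity
  constructor
  · rw [Real.log_le_iff_le_exp (by positivity), div_le_iff₀ hc, mul_comm]
    exact (Nat.cast_le.mpr hhigh).trans (bracketRoundsExp_le n q)
  · have hlog := (Real.le_log_iff_exp_le hT).mpr (exp_sub_one_le_of_bracketRoundsExp_lt hlow)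
    linarith

/-- For the schedule with `2n` exploration rounds per bracket followed by
`⌊e^q⌋` rounds in bracket `q`, the number of completed brackets `q` after
`T ≥ 2n + 3` rounds satisfies `log (T / (2n + e)) ≤ q ≤ 1 + log T`. -/
theorem bracket_count_log (n T q : ℕ) (hn : 1 ≤ n) (hq : 1 ≤ q)
    (hT : 2 * n + 3 ≤ T)
    (hlow : bracketRoundsExp n (q - 1) < T) (hhigh : T ≤ bracketRoundsExp n q) :
    Real.log ((T : ℝ) / (2 * n + Real.exp 1)) ≤ (q : ℝ) ∧
      (q : ℝ) ≤ 1 + Real.log T :=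
  bracket_count_log_general n T q hlow hhigh
end

section
/- Binary search demand estimation: in the deterministic-feedback non-strategyproof mechanism, the total over-allocation satisfies sum over rounds t >= 2 of max(a_{it} - Dtrue_{it}, 0) <= vmax * dmax for each agent i, where at each over-allocating round s_{r+1} the normalized over-allocation (a_{i,s_{r+1}}/v_{i,s_{r+1}} - w_i) is at most half the previous over-allocation, and the first over-allocation is at most dmax/2. -/
open Finset

/-! Only the rounds `s r` contribute. In round `s r` the excess `a - v w` is `v` times the
normalized excess, which is at most `dmax / 2 ^ (r + 1)` by the halving property; bounding
`v ≤ vmax` and summing the geometric series gives `vmax * dmax`. -/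

theorem le_div_two_pow_of_halving {m : ℕ} {x : Fin m → ℝ} {c : ℝ}
    (h0 : ∀ h : 0 < m, x ⟨0, h⟩ ≤ c)
    (hhalf : ∀ (r : ℕ) (h : r + 1 < m), x ⟨r + 1, h⟩ ≤ x ⟨r, Nat.lt_of_succ_lt h⟩ / 2) :
    ∀ r : Fin m, x r ≤ c / 2 ^ (r : ℕ)
  | ⟨0, h⟩ => by simpa using h0 h
  | ⟨r + 1, h⟩ =>
    calc x ⟨r + 1, h⟩ ≤ x ⟨r, Nat.lt_of_succ_lt h⟩ / 2 := hhalf r h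
      _ ≤ c / 2 ^ r / 2 := by
        gcongr
        exact le_div_two_pow_of_halving h0 hhalf ⟨r, Nat.lt_of_succ_lt h⟩
      _ = c / 2 ^ (r + 1) := by rw [pow_succ, div_div]

theorem sum_le_two_mul_of_halving {m : ℕ} {x : Fin m → ℝ} {c : ℝ} (hc : 0 ≤ c)
    (h0 : ∀ h : 0 < m, x ⟨0, h⟩ ≤ c)
    (hhalf : ∀ (r : ℕ) (h : r + 1 < m), x ⟨r + 1, h⟩ ≤ x ⟨r, Nat.lt_of_succ_lt h⟩ / 2) :
    ∑ r, x r ≤ 2 * c :=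
  calc ∑ r, x r ≤ ∑ r : Fin m, c / 2 ^ (r : ℕ) :=
        sum_le_sum fun r _ => le_div_two_pow_of_halving h0 hhalf r
    _ = c * ∑ r ∈ range m, (1 / 2 : ℝ) ^ r := by
        rw [Fin.sum_univ_eq_sum_range (fun r => c / 2 ^ r), mul_sum]
        simp only [div_eq_mul_inv, one_mul, inv_pow]
    _ ≤ c * 2 := mul_le_mul_of_nonneg_left (sum_geometric_two_le m) hc
    _ = 2 * c := mul_comm c 2

theorem sum_max_zero_le_sum_comp {ι κ M : Type*} [DecidableEq ι] [Fintype κ]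
    [AddCommMonoid M] [LinearOrder M] [IsOrderedAddMonoid M]
    {S : Finset ι} {g : ι → M} {s : κ → ι} (h : ∀ t ∈ S, 0 < g t → ∃ r, s r = t) :
    ∑ t ∈ S, max (g t) 0 ≤ ∑ r, max (g (s r)) 0 :=
  calc ∑ t ∈ S, max (g t) 0 = ∑ t ∈ S with t ∈ univ.image s, max (g t) 0 := by
        refine (sum_filter_of_ne fun t ht hne => ?_).symm
        obtain ⟨r, rfl⟩ := h t ht (lt_of_not_ge fun hle => hne (max_eq_right hle))
        exact mem_image_of_mem s (mem_univ r)
    _ ≤ ∑ t ∈ univ.image s, max (g t) 0 :=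
        sum_le_sum_of_subset_of_nonneg (fun t ht => (mem_filter.1 ht).2)
          fun _ _ _ => le_max_right _ _
    _ ≤ ∑ r, max (g (s r)) 0 := sum_image_le_of_nonneg fun _ _ => le_max_right _ _

theorem binary_search_overallocation_general (T : ℕ) (a v : ℕ → ℝ)
    (w dmax vmax : ℝ) (hdmax : 0 < dmax)
    (hv : ∀ t, 0 < v t) (hvmax : ∀ t, v t ≤ vmax)
    (m : ℕ) (s : Fin m → ℕ)
    (hrange : ∀ t : ℕ, (2 ≤ t ∧ t ≤ T ∧ v t * w < a t) ↔ ∃ r, s r = t)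
    (hfirst : ∀ h0 : 0 < m, a (s ⟨0, h0⟩) / v (s ⟨0, h0⟩) - w ≤ dmax / 2)
    (hhalf : ∀ (r : ℕ) (h1 : r + 1 < m),
      a (s ⟨r + 1, h1⟩) / v (s ⟨r + 1, h1⟩) - w
        ≤ (a (s ⟨r, Nat.lt_of_succ_lt h1⟩) / v (s ⟨r, Nat.lt_of_succ_lt h1⟩) - w) / 2) :
    ∑ t ∈ Finset.Icc 2 T, max (a t - v t * w) 0 ≤ vmax * dmax := by
  set x : Fin m → ℝ := fun r => a (s r) / v (s r) - w with hx
  have hx_pos (r : Fin m) : 0 < x r := by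
    have hover := ((hrange (s r)).2 ⟨r, rfl⟩).2.2
    rw [hx, sub_pos, lt_div_iff₀ (hv _)]
    linarith
  have hterm (r : Fin m) : max (a (s r) - v (s r) * w) 0 ≤ vmax * x r := by
    have hexcess : a (s r) - v (s r) * w = v (s r) * x r := by
      rw [hx]; field_simp [(hv (s r)).ne']
    rw [hexcess, max_eq_left (mul_pos (hv _) (hx_pos r)).le]
    exact mul_le_mul_of_nonneg_right (hvmax _) (hx_pos r).le
  calc ∑ t ∈ Icc 2 T, max (a t - v t * w) 0 ≤ ∑ r, max (a (s r) - v (s r) * w) 0 :=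
        sum_max_zero_le_sum_comp fun t ht hpos => by
          rw [mem_Icc] at ht
          exact (hrange t).1 ⟨ht.1, ht.2, sub_pos.1 hpos⟩
    _ ≤ vmax * ∑ r, x r := by rw [mul_sum]; exact sum_le_sum fun r _ => hterm r
    _ ≤ vmax * (2 * (dmax / 2)) :=
        mul_le_mul_of_nonneg_left (sum_le_two_mul_of_halving (by positivity) hfirst hhalf)
          ((hv 0).le.trans (hvmax 0))
    _ = vmax * dmax := by ring

/-- Binary-search demand estimation bounds the total over-allocation: if
`s : Fin m → ℕ` strictly monotonically enumerates exactly the rounds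
`t ∈ [2, T]` in which the allocation `a t` exceeds the true demand
`v t * w`, the first normalized excess is at most `dmax / 2`, and the
normalized excess at least halves between consecutive over-allocating rounds,
then `∑_{t=2}^T max (a t - v t * w) 0 ≤ vmax * dmax`. -/
theorem binary_search_overallocation (T : ℕ) (a v : ℕ → ℝ)
    (w dmax vmax : ℝ) (hw0 : 0 ≤ w) (hwd : w ≤ dmax) (hdmax : 0 < dmax)
    (hv : ∀ t, 0 < v t) (hvmax : ∀ t, v t ≤ vmax)
    (m : ℕ) (s : Fin m → ℕ) (hs : StrictMono s)
    (hrange : ∀ t : ℕ, (2 ≤ t ∧ t ≤ T ∧ v t * w < a t) ↔ ∃ r, s r = t)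
    (hfirst : ∀ h0 : 0 < m, a (s ⟨0, h0⟩) / v (s ⟨0, h0⟩) - w ≤ dmax / 2)
    (hhalf : ∀ (r : ℕ) (h1 : r + 1 < m),
      a (s ⟨r + 1, h1⟩) / v (s ⟨r + 1, h1⟩) - w
        ≤ (a (s ⟨r, Nat.lt_of_succ_lt h1⟩) / v (s ⟨r, Nat.lt_of_succ_lt h1⟩) - w) / 2) :
    ∑ t ∈ Finset.Icc 2 T, max (a t - v t * w) 0 ≤ vmax * dmax :=
  binary_search_overallocation_general T a v w dmax vmax hdmax hv hvmax m s hrange hfirst hhalf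
end

section
/- Elliptical potential bound: for allocations a_{it} in (0,1], loads v_{it} in [vmin, vmax], sub-Gaussian constants sigma_{it} in [sigmamin, sigmamax], entitlements e_i with a_{i1} = e_i, and A_{it}^2 = sum_{s=1}^{t-1} a_{is}^2/(v_{is}^2 sigma_{is}^2), one has sum_{t=1}^T min(c, a_{it}^2/(sigma_{it}^2 v_{it}^2 A_{it}^2)) <= (c / log(1+c)) * log(C3 * T), where C3 = (sigmamax * vmax / (sigmamin * vmin * min_i e_i))^2 and c > 0 is arbitrary. -/
/-!
Write `S t = ∑_{s=1}^{t} f s` for the running potential. The increment of `log S` at step `t`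
is `log (1 + f t / S (t-1))`, and by concavity of `log (1 + ·)` the capped ratio
`min c (f t / S (t-1))` is at most `c / log (1 + c)` times that increment. Summing telescopes to
`log (S T / S 1)`, and the bounds on allocations, loads and sub-Gaussian constants give
`S T ≤ T / (vmin smin)²` and `S 1 ≥ (minᵢ eᵢ / (vmax smax))²`.
-/

open Finset Real

theorem min_mul_log_one_add_le {c x : ℝ} (hc : 0 < c) (hx : 0 ≤ x) :
    min c x * log (1 + c) ≤ c * log (1 + x) := by
  set y := min c x
  have hy : 0 ≤ y := le_min hc.le hx
  -- the chord of the concave `log` between `1` and `1 + c`, evaluated at `1 + y`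
  have hchord : y / c * log (1 + c) + (1 - y / c) * log 1
      ≤ log (y / c * (1 + c) + (1 - y / c) * 1) :=
    strictConcaveOn_log_Ioi.concaveOn.2 (Set.mem_Ioi.2 (by linarith)) (Set.mem_Ioi.2 one_pos)
      (div_nonneg hy hc.le) (sub_nonneg.2 ((div_le_one hc).2 (min_le_left c x)))
      (add_sub_cancel _ _)
  have hpoint : y / c * (1 + c) + (1 - y / c) * 1 = 1 + y := by field_simp; ring
  rw [hpoint, log_one, mul_zero, add_zero] at hchord
  calc y * log (1 + c) = c * (y / c * log (1 + c)) := by field_simp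
    _ ≤ c * log (1 + y) := by gcongr
    _ ≤ c * log (1 + x) := by gcongr; exact min_le_right c x

theorem min_le_div_log_mul_log_one_add {c x : ℝ} (hc : 0 < c) (hx : 0 ≤ x) :
    min c x ≤ c / log (1 + c) * log (1 + x) := by
  rw [div_mul_eq_mul_div, le_div_iff₀ (log_pos (by linarith))]
  exact min_mul_log_one_add_le hc hx

/-- At `t = 1` the potential `∑_{s ∈ ∅} f s` vanishes, and the summand is `min c (f 1 / 0) = 0`. -/
theorem sum_min_div_partial_sum_le_log {f : ℕ → ℝ} {c : ℝ} (hc : 0 < c) (hf : ∀ s, 0 ≤ f s)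
    (hf₁ : 0 < f 1) {T : ℕ} (hT : 1 ≤ T) :
    ∑ t ∈ Icc 1 T, min c (f t / ∑ s ∈ Icc 1 (t - 1), f s)
      ≤ c / log (1 + c) * log ((∑ s ∈ Icc 1 T, f s) / f 1) := by
  induction T, hT using Nat.le_induction with
  | base => simp [hc.le, hf₁.ne']
  | succ T hT ih =>
    set S := ∑ s ∈ Icc 1 T, f s
    have hS : 0 < S := hf₁.trans_le (single_le_sum (fun s _ => hf s) (by simp [hT]))
    have hx : 0 ≤ f (T + 1) / S := div_nonneg (hf _) hS.le
    have hlog : log ((S + f (T + 1)) / f 1) = log (S / f 1) + log (1 + f (T + 1) / S) := by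
      rw [← log_mul (by positivity) (by positivity)]
      congr 1
      field_simp
    rw [sum_Icc_succ_top (by omega), sum_Icc_succ_top (by omega), Nat.add_sub_cancel, hlog,
      mul_add]
    gcongr
    exact min_le_div_log_mul_log_one_add hc hx

theorem sum_min_div_partial_sum_le_log_mul {f : ℕ → ℝ} {c m M : ℝ} (hc : 0 < c) (hm : 0 < m)
    (hf : ∀ s, 0 ≤ f s) (hfM : ∀ s, f s ≤ M) (hf₁ : m ≤ f 1) {T : ℕ} (hT : 1 ≤ T) :
    ∑ t ∈ Icc 1 T, min c (f t / ∑ s ∈ Icc 1 (t - 1), f s) ≤ c / log (1 + c) * log (M / m * T) := by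
  have hf₁_pos : 0 < f 1 := hm.trans_le hf₁
  have hM : 0 ≤ M := (hf 1).trans (hfM 1)
  have hsum : ∑ s ∈ Icc 1 T, f s ≤ M * T := by
    simpa [mul_comm] using sum_le_card_nsmul (Icc 1 T) _ _ fun s _ => hfM s
  have hlog : 0 < log (1 + c) := log_pos (by linarith)
  grw [sum_min_div_partial_sum_le_log hc hf hf₁_pos hT]
  gcongr
  · exact div_pos (hf₁_pos.trans_le (single_le_sum (fun s _ => hf s) (by simp [hT]))) hf₁_pos
  · rw [div_mul_eq_mul_div]
    gcongr

/-- Elliptical potential bound: for allocations `a i t ∈ (0,1]`, loads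
`v i t ∈ [vmin, vmax]`, sub-Gaussian constants `σ i t ∈ [smin, smax]`,
entitlements `e i = a i 1`, and
`A_{it}² = ∑_{s=1}^{t-1} a_{is}² / (v_{is}² σ_{is}²)`, one has
`∑_{t=1}^T min c (a_{it}²/(σ_{it}² v_{it}² A_{it}²))
  ≤ (c / log (1+c)) * log (C₃ T)` with
`C₃ = (smax vmax / (smin vmin minᵢ eᵢ))²`. -/
theorem elliptical_potential_bound {n : ℕ} (T : ℕ) (hT : 1 ≤ T)
    (a v σ : Fin n → ℕ → ℝ) (e : Fin n → ℝ)
    (vmin vmax smin smax c : ℝ)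
    (hc : 0 < c) (hvmin : 0 < vmin) (hsmin : 0 < smin)
    (ha : ∀ i t, 0 < a i t ∧ a i t ≤ 1)
    (hv : ∀ i t, vmin ≤ v i t ∧ v i t ≤ vmax)
    (hσ : ∀ i t, smin ≤ σ i t ∧ σ i t ≤ smax)
    (hinit : ∀ i, a i 1 = e i) (hepos : ∀ i, 0 < e i)
    (i : Fin n) :
    ∑ t ∈ Finset.Icc 1 T,
        min c ((a i t) ^ 2 / ((σ i t) ^ 2 * (v i t) ^ 2 *
          (∑ s ∈ Finset.Icc 1 (t - 1), (a i s) ^ 2 / ((v i s) ^ 2 * (σ i s) ^ 2))))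
      ≤ (c / Real.log (1 + c)) *
          Real.log ((smax * vmax /
            (smin * vmin * Finset.inf' Finset.univ ⟨i, Finset.mem_univ i⟩ e)) ^ 2 * T) := by
  set E := univ.inf' ⟨i, mem_univ i⟩ e
  set f : ℕ → ℝ := fun s => a i s ^ 2 / (v i s ^ 2 * σ i s ^ 2)
  have hE : 0 < E := (lt_inf'_iff (a := 0) _).2 fun j _ => hepos j
  have hv₀ t : 0 < v i t := hvmin.trans_le (hv i t).1
  have hσ₀ t : 0 < σ i t := hsmin.trans_le (hσ i t).1
  have hvmax : 0 < vmax := (hv₀ 0).trans_le (hv i 0).2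
  have hsmax : 0 < smax := (hσ₀ 0).trans_le (hσ i 0).2
  have hf_le s : f s ≤ 1 / (vmin ^ 2 * smin ^ 2) := by
    have := (hv i s).1; have := (hσ i s).1
    simp only [f]; gcongr; exact pow_le_one₀ (ha i s).1.le (ha i s).2
  have hf₁ : E ^ 2 / (vmax ^ 2 * smax ^ 2) ≤ f 1 := by
    have := (hv i 1).2; have := (hσ i 1).2; have := hv₀ 1; have := hσ₀ 1
    simp only [f, hinit]; gcongr; exact inf'_le _ (mem_univ i)
  have hC₃ : 1 / (vmin ^ 2 * smin ^ 2) / (E ^ 2 / (vmax ^ 2 * smax ^ 2))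
      = (smax * vmax / (smin * vmin * E)) ^ 2 := by
    field_simp
  calc _ = ∑ t ∈ Icc 1 T, min c (f t / ∑ s ∈ Icc 1 (t - 1), f s) := by
        refine sum_congr rfl fun t _ => ?_
        rw [div_div, mul_comm (σ i t ^ 2)]
    _ ≤ _ := hC₃ ▸ sum_min_div_partial_sum_le_log_mul hc (by positivity) (fun s => by positivity)
        hf_le hf₁ hT
end
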